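/- arXiv:1004.4407 — 7 statements merged into one kernel-verified Lean document; each statement's English description precedes it below -/
import Mathlib

section
/- Let N ∈ ℕ, let μ_i > 0 and b_i > 0 for 0 ≤ i ≤ N, and let h_i > 0 for 0 ≤ i ≤ N. Then for every g : {0,…,N+1} → ℝ with g_{N+1} = 0, one has ∑_{i=0}^N μ_i g_i² ≤ (∑_{j=0}^N μ_j b_j (g_{j+1} − g_j)²) · max_{0≤j≤N} [ (1/h_j) ∑_{i=0}^j μ_i ∑_{k=i}^N h_k/(μ_k b_k) ]. -/
/-! Writing `g i = -∑_{k=i}^N (g (k+1) - g k)` and applying Cauchy–Schwarz with the weights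
`w k = h k / (μ k * b k)` bounds `g i ^ 2` by `(∑_{k ≥ i} w k) * ∑_{k ≥ i} D k / h k`, where
`D k = μ k b k (g (k+1) - g k)²` is the Dirichlet term. Multiplying by `μ i`, summing over `i`
and exchanging the two sums, the coefficient of `D k` becomes `(1 / h k) ∑_{i ≤ k} μ i ∑_{l ≥ i} w l`,
which is at most the maximum over `k`. -/

open Finset

theorem Finset.sum_range_sum_Icc_comm {M : Type*} [AddCommMonoid M] (N : ℕ) (F : ℕ → ℕ → M) :
    ∑ i ∈ range (N + 1), ∑ k ∈ Icc i N, F i k =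
      ∑ k ∈ range (N + 1), ∑ i ∈ range (k + 1), F i k :=
  sum_comm' fun i k => by simp only [mem_range, mem_Icc]; omega

theorem Finset.sum_mul_le_sum_mul_sup' {ι R : Type*} [Semiring R] [LinearOrder R]
    [IsOrderedRing R] (s : Finset ι) (hs : s.Nonempty) {a : ι → R} (c : ι → R)
    (ha : ∀ i ∈ s, 0 ≤ a i) :
    ∑ i ∈ s, a i * c i ≤ (∑ i ∈ s, a i) * s.sup' hs c := by
  rw [sum_mul]
  exact sum_le_sum fun i hi => mul_le_mul_of_nonneg_left (le_sup' c hi) (ha i hi)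

theorem sq_le_sum_mul_sum_sq_div_of_eq_zero {g w : ℕ → ℝ} {i N : ℕ} (hi : i ≤ N)
    (hw : ∀ k ∈ Icc i N, 0 < w k) (hg : g (N + 1) = 0) :
    g i ^ 2 ≤ (∑ k ∈ Icc i N, w k) * ∑ k ∈ Icc i N, (g (k + 1) - g k) ^ 2 / w k := by
  have hgi : g i = -∑ k ∈ Icc i N, (g (k + 1) - g k) := by
    rw [sum_Icc_sub hi, hg]; ring
  rw [hgi, neg_sq]
  refine sum_sq_le_sum_mul_sum_of_sq_le_mul _ (fun k hk => (hw k hk).le)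
    (fun k hk => div_nonneg (sq_nonneg _) (hw k hk).le) fun k hk => ?_
  rw [mul_div_cancel₀ _ (hw k hk).ne']

theorem sum_mul_sq_le_of_eq_zero (N : ℕ) {μ w g : ℕ → ℝ} (hμ : ∀ i ≤ N, 0 ≤ μ i)
    (hw : ∀ k ≤ N, 0 < w k) (hg : g (N + 1) = 0) :
    ∑ i ∈ range (N + 1), μ i * g i ^ 2 ≤
      ∑ k ∈ range (N + 1),
        (g (k + 1) - g k) ^ 2 / w k * ∑ i ∈ range (k + 1), μ i * ∑ l ∈ Icc i N, w l := by
  calc ∑ i ∈ range (N + 1), μ i * g i ^ 2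
      ≤ ∑ i ∈ range (N + 1), ∑ k ∈ Icc i N,
          (g (k + 1) - g k) ^ 2 / w k * (μ i * ∑ l ∈ Icc i N, w l) := by
        refine sum_le_sum fun i hi => ?_
        have hiN : i ≤ N := Nat.lt_succ_iff.mp (mem_range.mp hi)
        calc μ i * g i ^ 2
            ≤ μ i * ((∑ l ∈ Icc i N, w l) * ∑ k ∈ Icc i N, (g (k + 1) - g k) ^ 2 / w k) :=
              mul_le_mul_of_nonneg_left (sq_le_sum_mul_sum_sq_div_of_eq_zero hiN
                (fun k hk => hw k (mem_Icc.mp hk).2) hg) (hμ i hiN)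
          _ = _ := by rw [mul_sum, mul_sum]; exact sum_congr rfl fun k _ => by ring
    _ = ∑ k ∈ range (N + 1), ∑ i ∈ range (k + 1),
          (g (k + 1) - g k) ^ 2 / w k * (μ i * ∑ l ∈ Icc i N, w l) :=
        sum_range_sum_Icc_comm N _
    _ = _ := by simp only [← mul_sum]

/-- Weighted Cauchy–Schwarz (discrete Hardy-type) estimate: for a birth–death
chain with weights `μ`, rates `b`, auxiliary positive weights `h`, and any
`g` with `g (N+1) = 0`, the weighted `ℓ²` norm of `g` is bounded by the
Dirichlet form times the maximum of the double-sum quantity. -/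
theorem stmt_0 (N : ℕ) (μ b h g : ℕ → ℝ)
    (hμ : ∀ i ≤ N, 0 < μ i) (hb : ∀ i ≤ N, 0 < b i) (hh : ∀ i ≤ N, 0 < h i)
    (hg : g (N + 1) = 0) :
    ∑ i ∈ Finset.range (N + 1), μ i * g i ^ 2 ≤
      (∑ j ∈ Finset.range (N + 1), μ j * b j * (g (j + 1) - g j) ^ 2) *
        (Finset.range (N + 1)).sup' ⟨0, Finset.mem_range.mpr (Nat.succ_pos N)⟩
          (fun j => (1 / h j) *
            ∑ i ∈ Finset.range (j + 1), μ i * ∑ k ∈ Finset.Icc i N, h k / (μ k * b k)) := by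
  have hk_le {k : ℕ} (hk : k ∈ range (N + 1)) : k ≤ N := Nat.lt_succ_iff.mp (mem_range.mp hk)
  have hw : ∀ k ≤ N, 0 < h k / (μ k * b k) := fun k hk =>
    div_pos (hh k hk) (mul_pos (hμ k hk) (hb k hk))
  calc ∑ i ∈ range (N + 1), μ i * g i ^ 2
      ≤ ∑ k ∈ range (N + 1), (g (k + 1) - g k) ^ 2 / (h k / (μ k * b k)) *
          ∑ i ∈ range (k + 1), μ i * ∑ l ∈ Icc i N, h l / (μ l * b l) :=
        sum_mul_sq_le_of_eq_zero N (fun i hi => (hμ i hi).le) hw hg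
    _ = ∑ k ∈ range (N + 1), μ k * b k * (g (k + 1) - g k) ^ 2 *
          ((1 / h k) * ∑ i ∈ range (k + 1), μ i * ∑ l ∈ Icc i N, h l / (μ l * b l)) := by
        refine sum_congr rfl fun k hk => ?_
        have := (hh k (hk_le hk)).ne'
        have := (hμ k (hk_le hk)).ne'
        have := (hb k (hk_le hk)).ne'
        field_simp
    _ ≤ _ := sum_mul_le_sum_mul_sup' _ _ _ fun k hk =>
        mul_nonneg (mul_pos (hμ k (hk_le hk)) (hb k (hk_le hk))).le (sq_nonneg _)
end

section
/- Let N ∈ ℕ, μ_i > 0 and ν_i > 0 for 0 ≤ i ≤ N. Set φ_n = ∑_{k=n}^N ν_k and δ = max_{0≤n≤N} (∑_{j=0}^n μ_j)·φ_n. Then for every n with 0 ≤ n ≤ N, ∑_{j=0}^n μ_j √(φ_j) ≤ 2δ/√(φ_n). -/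
/-!
Summation by parts: writing `M n = ∑_{j ≤ n} μ j`, each step of the Abel transform contributes
`M n (√φₙ - √φₙ₊₁) ≤ δ (√φₙ - √φₙ₊₁) / φₙ ≤ δ (1/√φₙ₊₁ - 1/√φₙ)`, and these terms telescope.
The boundary term `M n √φₙ` is at most `δ / √φₙ` as well, whence the factor `2`.
-/

open Finset Real

theorem sqrt_sub_sqrt_div_le_inv_sqrt_sub_inv_sqrt {x y : ℝ} (hy : 0 < y) (hyx : y ≤ x) :
    (√x - √y) / x ≤ (√y)⁻¹ - (√x)⁻¹ := by
  have hsy : 0 < √y := sqrt_pos.mpr hy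
  have hsx : 0 < √x := sqrt_pos.mpr (hy.trans_le hyx)
  have hle : √y ≤ √x := sqrt_le_sqrt hyx
  rw [inv_sub_inv hsy.ne' hsx.ne']
  calc (√x - √y) / x = (√x - √y) / (√x * √x) := by rw [mul_self_sqrt (hy.trans_le hyx).le]
    _ ≤ (√x - √y) / (√y * √x) := by gcongr

section AbelSummation

variable {μ φ : ℕ → ℝ} {δ : ℝ} {n : ℕ}

theorem sum_mul_sqrt_le_of_antitone (hφ : ∀ m ≤ n, 0 < φ m) (hanti : ∀ m < n, φ (m + 1) ≤ φ m)
    (hδ : ∀ m ≤ n, (∑ j ∈ range (m + 1), μ j) * φ m ≤ δ) (hδ₀ : 0 ≤ δ) :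
    ∑ j ∈ range (n + 1), μ j * √(φ j) ≤
      (∑ j ∈ range (n + 1), μ j) * √(φ n) + δ * ((√(φ n))⁻¹ - (√(φ 0))⁻¹) := by
  induction n with
  | zero => simp
  | succ n ih =>
    have ih := ih (fun m hm => hφ m (by omega)) (fun m hm => hanti m (by omega))
      (fun m hm => hδ m (by omega))
    have hpos : 0 < φ n := hφ n (by omega)
    have hstep := hanti n (by omega)
    have hdiff : 0 ≤ √(φ n) - √(φ (n + 1)) := sub_nonneg.mpr (sqrt_le_sqrt hstep)
    have hM : ∑ j ∈ range (n + 1), μ j ≤ δ / φ n := (le_div_iff₀ hpos).mpr (hδ n (by omega))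
    have htelescope : (∑ j ∈ range (n + 1), μ j) * (√(φ n) - √(φ (n + 1))) ≤
        δ * ((√(φ (n + 1)))⁻¹ - (√(φ n))⁻¹) :=
      calc (∑ j ∈ range (n + 1), μ j) * (√(φ n) - √(φ (n + 1)))
          ≤ δ / φ n * (√(φ n) - √(φ (n + 1))) := mul_le_mul_of_nonneg_right hM hdiff
        _ = δ * ((√(φ n) - √(φ (n + 1))) / φ n) := by ring
        _ ≤ δ * ((√(φ (n + 1)))⁻¹ - (√(φ n))⁻¹) := by
          gcongr
          exact sqrt_sub_sqrt_div_le_inv_sqrt_sub_inv_sqrt (hφ (n + 1) le_rfl) hstep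
    rw [sum_range_succ, sum_range_succ (f := μ)]
    linarith

theorem sum_mul_sqrt_le_two_mul_div_sqrt (hφ : ∀ m ≤ n, 0 < φ m)
    (hanti : ∀ m < n, φ (m + 1) ≤ φ m) (hδ : ∀ m ≤ n, (∑ j ∈ range (m + 1), μ j) * φ m ≤ δ)
    (hδ₀ : 0 ≤ δ) :
    ∑ j ∈ range (n + 1), μ j * √(φ j) ≤ 2 * δ / √(φ n) := by
  have hsn : 0 < √(φ n) := sqrt_pos.mpr (hφ n le_rfl)
  have hboundary : (∑ j ∈ range (n + 1), μ j) * √(φ n) ≤ δ / √(φ n) := by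
    rw [le_div_iff₀ hsn, mul_assoc, mul_self_sqrt (hφ n le_rfl).le]
    exact hδ n le_rfl
  have htail : δ * ((√(φ n))⁻¹ - (√(φ 0))⁻¹) ≤ δ / √(φ n) := by
    rw [div_eq_mul_inv]
    exact mul_le_mul_of_nonneg_left (sub_le_self _ (by positivity)) hδ₀
  calc ∑ j ∈ range (n + 1), μ j * √(φ j)
      ≤ (∑ j ∈ range (n + 1), μ j) * √(φ n) + δ * ((√(φ n))⁻¹ - (√(φ 0))⁻¹) :=
        sum_mul_sqrt_le_of_antitone hφ hanti hδ hδ₀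
    _ ≤ δ / √(φ n) + δ / √(φ n) := add_le_add hboundary htail
    _ = 2 * δ / √(φ n) := by ring

end AbelSummation

/-- Key step for the lower basic estimate `λ₀ ≥ (4δ)⁻¹`: with
`φ n = ∑_{k=n}^N ν k` and `δ = max_n (∑_{j=0}^n μ j) * φ n`, one has
`∑_{j=0}^n μ j * √(φ j) ≤ 2δ / √(φ n)` for every `n ≤ N`. -/
theorem stmt_1 (N : ℕ) (μ ν : ℕ → ℝ)
    (hμ : ∀ i ≤ N, 0 < μ i) (hν : ∀ i ≤ N, 0 < ν i) :
    ∀ n ≤ N,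
      ∑ j ∈ Finset.range (n + 1), μ j * Real.sqrt (∑ k ∈ Finset.Icc j N, ν k) ≤
        2 * ((Finset.range (N + 1)).sup' ⟨0, Finset.mem_range.mpr (Nat.succ_pos N)⟩
            (fun m => (∑ j ∈ Finset.range (m + 1), μ j) * ∑ k ∈ Finset.Icc m N, ν k)) /
          Real.sqrt (∑ k ∈ Finset.Icc n N, ν k) := by
  intro n hn
  set φ : ℕ → ℝ := fun m => ∑ k ∈ Icc m N, ν k
  have hφ : ∀ m ≤ N, 0 < φ m := fun m hm =>
    sum_pos (fun k hk => hν k (mem_Icc.mp hk).2) ⟨m, mem_Icc.mpr ⟨le_rfl, hm⟩⟩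
  have hanti : ∀ m < N, φ (m + 1) ≤ φ m := fun m _ =>
    sum_le_sum_of_subset_of_nonneg (Icc_subset_Icc_left m.le_succ)
      (fun k hk _ => (hν k (mem_Icc.mp hk).2).le)
  have hδ : ∀ m ≤ N, (∑ j ∈ range (m + 1), μ j) * φ m ≤
      (range (N + 1)).sup' ⟨0, mem_range.mpr N.succ_pos⟩
        (fun m => (∑ j ∈ range (m + 1), μ j) * φ m) := fun m hm =>
    le_sup' (fun m => (∑ j ∈ range (m + 1), μ j) * φ m) (mem_range.mpr (Nat.lt_succ_of_le hm))
  have hδ₀ := (mul_pos (by simpa using hμ 0 N.zero_le) (hφ 0 N.zero_le)).le.trans (hδ 0 N.zero_le)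
  exact sum_mul_sqrt_le_two_mul_div_sqrt (fun m hm => hφ m (hm.trans hn))
    (fun m hm => hanti m (hm.trans_le hn)) (fun m hm => hδ m (hm.trans hn)) hδ₀
end

section
/- Let N ∈ ℕ, let μ_i > 0 and b_i > 0 for 0 ≤ i ≤ N, and set ν_i = 1/(μ_i b_i). Fix integers 0 ≤ n ≤ m ≤ N, and define f : {0,…,N+1} → ℝ by f_i = ∑_{k=max(i,n)}^m ν_k for i ≤ m and f_i = 0 for i > m. Then (i) ∑_{i=0}^N μ_i b_i (f_{i+1} − f_i)² = ∑_{k=n}^m ν_k, and (ii) ∑_{i=0}^N μ_i f_i² ≥ (∑_{j=0}^n μ_j)·(∑_{k=n}^m ν_k)². Consequently ∑_{i=0}^N μ_i f_i² ≥ (∑_{j=0}^n μ_j)(∑_{k=n}^m ν_k)·∑_{i=0}^N μ_i b_i (f_{i+1} − f_i)². -/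
/-!
The increments of the test function `f` are `-ν i` on `[n, m]` and `0` elsewhere, so with
`ν i = 1 / (μ i b i)` every term of the Dirichlet form on `[n, m]` equals `μ i b i ν i ^ 2 = ν i`,
and the form is `∑_{k=n}^m ν k`. On `[0, n]` the function is constant, equal to that same sum,
which already bounds `μ(f²)` from below.
-/

open Finset

/-- Vanishes for `i > m`, where the interval is empty. -/
noncomputable def testFn (ν : ℕ → ℝ) (n m i : ℕ) : ℝ :=
  ∑ k ∈ Icc (max i n) m, ν k

lemma testFn_eq_sum_ite (ν : ℕ → ℝ) (n m i : ℕ) :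
    testFn ν n m i = ∑ k ∈ Icc n m, if i ≤ k then ν k else 0 := by
  rw [testFn, ← sum_filter]
  congr 1
  ext
  simp only [mem_Icc, mem_filter]
  omega

lemma testFn_of_le {i n : ℕ} (ν : ℕ → ℝ) (m : ℕ) (hi : i ≤ n) :
    testFn ν n m i = ∑ k ∈ Icc n m, ν k := by
  rw [testFn, max_eq_right hi]

lemma testFn_sub_succ (ν : ℕ → ℝ) (n m i : ℕ) :
    testFn ν n m i - testFn ν n m (i + 1) = if i ∈ Icc n m then ν i else 0 := by
  rw [testFn_eq_sum_ite, testFn_eq_sum_ite, ← sum_sub_distrib, ← sum_ite_eq' (Icc n m) i ν]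
  refine sum_congr rfl fun k _ => ?_
  split_ifs <;> first | omega | ring1

lemma sum_mul_testFn_sub_sq {N n m : ℕ} (w : ℕ → ℝ) (hmN : m ≤ N)
    (hw : ∀ i ∈ Icc n m, w i ≠ 0) :
    ∑ i ∈ range (N + 1), w i * (testFn (fun k => 1 / w k) n m (i + 1) -
        testFn (fun k => 1 / w k) n m i) ^ 2 =
      ∑ k ∈ Icc n m, 1 / w k := by
  have hterm : ∀ i, w i * (testFn (fun k => 1 / w k) n m (i + 1) -
      testFn (fun k => 1 / w k) n m i) ^ 2 = if i ∈ Icc n m then 1 / w i else 0 := by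
    intro i
    rw [← neg_sub, neg_sq, testFn_sub_succ]
    split_ifs with hi
    · field_simp [hw i hi]
    · ring
  have hsub : Icc n m ⊆ range (N + 1) := fun k hk => by
    simp only [mem_Icc, mem_range] at hk ⊢
    omega
  simp only [hterm, sum_ite_mem, inter_eq_right.mpr hsub]

lemma sum_range_mul_sq_ge_of_eq_const {N n : ℕ} (w f : ℕ → ℝ) (c : ℝ) (hnN : n ≤ N)
    (hw : ∀ i ≤ N, 0 ≤ w i) (hf : ∀ i ≤ n, f i = c) :
    (∑ j ∈ range (n + 1), w j) * c ^ 2 ≤ ∑ i ∈ range (N + 1), w i * f i ^ 2 := calc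
  (∑ j ∈ range (n + 1), w j) * c ^ 2 = ∑ i ∈ range (n + 1), w i * f i ^ 2 := by
    rw [sum_mul]
    refine sum_congr rfl fun i hi => ?_
    rw [hf i (Nat.lt_succ_iff.mp (mem_range.mp hi))]
  _ ≤ ∑ i ∈ range (N + 1), w i * f i ^ 2 := by
    refine sum_le_sum_of_subset_of_nonneg (range_subset_range.mpr (by omega)) fun i hi _ => ?_
    exact mul_nonneg (hw i (Nat.lt_succ_iff.mp (mem_range.mp hi))) (sq_nonneg _)

/-- Explicit test-function computation proving the upper basic estimate
`λ₀ ≤ δ⁻¹` for the first Dirichlet eigenvalue of a birth–death process: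
with `f i = ∑_{k = max i n}^m ν k` for `i ≤ m`, `f i = 0` for `i > m`,
one computes the Dirichlet form and bounds the `L²`-norm from below. -/
theorem stmt_2 (N n m : ℕ) (hnm : n ≤ m) (hmN : m ≤ N) (μ b : ℕ → ℝ)
    (hμ : ∀ i ≤ N, 0 < μ i) (hb : ∀ i ≤ N, 0 < b i)
    (f : ℕ → ℝ)
    (hf1 : ∀ i ≤ m, f i = ∑ k ∈ Finset.Icc (max i n) m, 1 / (μ k * b k))
    (hf2 : ∀ i, m < i → f i = 0) :
    (∑ i ∈ Finset.range (N + 1), μ i * b i * (f (i + 1) - f i) ^ 2 =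
        ∑ k ∈ Finset.Icc n m, 1 / (μ k * b k)) ∧
    ((∑ j ∈ Finset.range (n + 1), μ j) * (∑ k ∈ Finset.Icc n m, 1 / (μ k * b k)) ^ 2 ≤
        ∑ i ∈ Finset.range (N + 1), μ i * f i ^ 2) ∧
    ((∑ j ∈ Finset.range (n + 1), μ j) * (∑ k ∈ Finset.Icc n m, 1 / (μ k * b k)) *
        (∑ i ∈ Finset.range (N + 1), μ i * b i * (f (i + 1) - f i) ^ 2) ≤
        ∑ i ∈ Finset.range (N + 1), μ i * f i ^ 2) := by
  obtain rfl : f = testFn (fun k => 1 / (μ k * b k)) n m := funext fun i => by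
    rcases le_or_gt i m with him | hmi
    · exact hf1 i him
    · rw [hf2 i hmi, testFn, Icc_eq_empty (by omega), sum_empty]
  have hdirichlet := sum_mul_testFn_sub_sq (n := n) (fun i => μ i * b i) hmN fun i hi => by
    have := mem_Icc.mp hi
    exact (mul_pos (hμ i (by omega)) (hb i (by omega))).ne'
  have hL2 := sum_range_mul_sq_ge_of_eq_const μ _ _ (hnm.trans hmN) (fun i hi => (hμ i hi).le)
    fun i hi => testFn_of_le (fun k => 1 / (μ k * b k)) m hi
  refine ⟨hdirichlet, hL2, ?_⟩
  rw [hdirichlet, mul_assoc, ← sq]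
  exact hL2
end

section
/- Let (μ_k)_{k≥0} and (ν_k)_{k≥0} be sequences of positive reals with ∑_{k=0}^∞ ν_k < ∞. Set φ_i = ∑_{k=i}^∞ ν_k and X_k = ∑_{j=0}^k μ_j, and assume X_k φ_k ≤ δ for all k ≥ 0, for some constant δ < ∞. Then for every i ≥ 0, ∑_{k=0}^∞ μ_k φ_{max(k,i)}² ≤ 2δ φ_i. -/
/-!
Summation by parts: with `X n = ∑_{j<n} μ j` and `ψ` antitone, the partial sums satisfy
`∑_{k<n} μ k ψ k² ≤ 2δ (ψ 0 - ψ n) + X n ψ n²`, because each step costs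
`X (ψ n² - ψ (n+1)²) ≤ 2 X ψ n (ψ n - ψ (n+1)) ≤ 2δ (ψ n - ψ (n+1))`.
The boundary term is at most `δ ψ n`. With `φ` the tail sums of `ν`, `ψ k = φ (max k i)`
still satisfies `X (k+1) ψ k ≤ δ`, since `X` is monotone.
-/

open Finset

lemma mul_sq_sub_sq_le {X a b δ : ℝ} (hX : 0 ≤ X) (hba : b ≤ a)
    (h : X * a ≤ δ) : X * (a ^ 2 - b ^ 2) ≤ 2 * δ * (a - b) := by
  calc X * (a ^ 2 - b ^ 2) = (a - b) * (X * (a + b)) := by ring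
    _ ≤ (a - b) * (2 * δ) := by
      refine mul_le_mul_of_nonneg_left ?_ (sub_nonneg.2 hba)
      linarith [mul_le_mul_of_nonneg_left hba hX]
    _ = 2 * δ * (a - b) := by ring

section AbelSummation

variable {μ ψ : ℕ → ℝ} {δ : ℝ}

lemma sum_range_mul_sq_le_of_antitone (hμ : ∀ k, 0 ≤ μ k) (hψ : Antitone ψ)
    (hψ0 : ∀ k, 0 ≤ ψ k) (hδ : ∀ k, (∑ j ∈ range (k + 1), μ j) * ψ k ≤ δ) (n : ℕ) :
    ∑ k ∈ range n, μ k * ψ k ^ 2 ≤ 2 * δ * ψ 0 := by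
  have hX : ∀ n, 0 ≤ ∑ j ∈ range n, μ j := fun n => sum_nonneg fun j _ => hμ j
  have hδ0 : 0 ≤ δ := (mul_nonneg (hX 1) (hψ0 0)).trans (hδ 0)
  have invariant : ∀ m, ∑ k ∈ range m, μ k * ψ k ^ 2 ≤
      2 * δ * (ψ 0 - ψ m) + (∑ j ∈ range m, μ j) * ψ m ^ 2 := by
    intro m
    induction m with
    | zero => simp
    | succ m ih =>
      have step := mul_sq_sub_sq_le (hX (m + 1)) (hψ (Nat.le_add_right m 1)) (hδ m)
      simp only [sum_range_succ] at step ⊢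
      linarith
  have boundary : (∑ j ∈ range n, μ j) * ψ n ≤ δ :=
    le_trans (by gcongr; exacts [hψ0 n, fun j _ _ => hμ j, n.le_succ]) (hδ n)
  linarith [invariant n, mul_nonneg hδ0 (hψ0 n), mul_le_mul_of_nonneg_right boundary (hψ0 n)]

lemma summable_and_tsum_mul_sq_le_of_antitone (hμ : ∀ k, 0 ≤ μ k) (hψ : Antitone ψ)
    (hψ0 : ∀ k, 0 ≤ ψ k) (hδ : ∀ k, (∑ j ∈ range (k + 1), μ j) * ψ k ≤ δ) :
    Summable (fun k => μ k * ψ k ^ 2) ∧ ∑' k, μ k * ψ k ^ 2 ≤ 2 * δ * ψ 0 := by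
  have hnn : ∀ k, 0 ≤ μ k * ψ k ^ 2 := fun k => mul_nonneg (hμ k) (sq_nonneg _)
  have hbound := sum_range_mul_sq_le_of_antitone hμ hψ hψ0 hδ
  exact ⟨summable_of_sum_range_le hnn hbound, Real.tsum_le_of_sum_range_le hnn hbound⟩

end AbelSummation

lemma antitone_tsum_nat_add {ν : ℕ → ℝ} (hν : ∀ k, 0 ≤ ν k) (hsum : Summable ν) :
    Antitone (fun n => ∑' m, ν (n + m)) := by
  refine antitone_nat_of_succ_le fun n => ?_
  have h := (hsum.comp_injective (add_right_injective n)).tsum_eq_zero_add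
  simp only [Function.comp_def, add_zero, ← add_assoc, add_right_comm n _ 1] at h
  linarith [hν n]

/-- Summation-by-parts estimate showing `δ₁′ ≤ 2δ`: if `φ i = ∑_{k=i}^∞ ν k`
and `X k * φ k ≤ δ` for all `k` (with `X k = ∑_{j=0}^k μ j`), then
`∑_{k=0}^∞ μ k * φ (max k i)² ≤ 2 δ φ i`; in particular the series converges. -/
theorem stmt_3 (μ ν : ℕ → ℝ) (hμ : ∀ k, 0 < μ k) (hν : ∀ k, 0 < ν k)
    (hsum : Summable ν) (δ : ℝ)
    (hδ : ∀ k, (∑ j ∈ Finset.range (k + 1), μ j) * (∑' mm : ℕ, ν (k + mm)) ≤ δ) :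
    ∀ i : ℕ,
      Summable (fun k : ℕ => μ k * (∑' mm : ℕ, ν (max k i + mm)) ^ 2) ∧
      (∑' k : ℕ, μ k * (∑' mm : ℕ, ν (max k i + mm)) ^ 2) ≤
        2 * δ * (∑' mm : ℕ, ν (i + mm)) := by
  intro i
  set φ : ℕ → ℝ := fun n => ∑' m, ν (n + m)
  have hφ : Antitone φ := antitone_tsum_nat_add (fun k => (hν k).le) hsum
  have hφ0 : ∀ n, 0 ≤ φ n := fun n => tsum_nonneg fun m => (hν _).le
  have hδi : ∀ k, (∑ j ∈ range (k + 1), μ j) * φ (max k i) ≤ δ := fun k =>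
    le_trans (by gcongr; exacts [hφ0 _, fun j _ _ => (hμ j).le, by omega]) (hδ (max k i))
  simpa [φ] using summable_and_tsum_mul_sq_le_of_antitone (fun k => (hμ k).le)
    (hφ.comp_monotone fun a b h => max_le_max_right i h) (fun k => hφ0 _) hδi
end

section
/- Let N ∈ ℕ, a_0 = 0, a_i > 0 for 1 ≤ i ≤ N, b_i > 0 for 0 ≤ i ≤ N, μ_0 = 1, μ_i = (b_0⋯b_{i−1})/(a_1⋯a_i), and ν_i = 1/(μ_i b_i). Suppose λ > 0 and g : {0,…,N+1} → ℝ is positive on {0,…,N}, g_{N+1} ≥ 0, and g satisfies b_i(g_{i+1} − g_i) + a_i(g_{i−1} − g_i) = −λ g_i for 0 ≤ i ≤ N (convention: the a_0 term vanishes). Then g is strictly decreasing on {0,…,N+1}, and for every 0 ≤ n ≤ N, ∑_{k=n}^N ν_k ∑_{i=0}^k μ_i g_i = (g_n − g_{N+1})/λ. -/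
/-- Dirichlet eigenvalue problem for a finite birth–death chain with absorbing
boundary at `N+1`: a positive eigenfunction of `λ > 0` is strictly decreasing,
and `∑_{k=n}^N ν k ∑_{i=0}^k μ i g i = (g n − g (N+1)) / λ` for every `n ≤ N`. -/
theorem stmt_5 (N : ℕ) (a b μ g : ℕ → ℝ) (lam : ℝ) (hlam : 0 < lam)
    (ha0 : a 0 = 0) (ha : ∀ i, 1 ≤ i → i ≤ N → 0 < a i) (hb : ∀ i ≤ N, 0 < b i)
    (hμ : ∀ i ≤ N, μ i = (∏ j ∈ Finset.range i, b j) / (∏ j ∈ Finset.Icc 1 i, a j))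
    (hgpos : ∀ i ≤ N, 0 < g i) (hgN : 0 ≤ g (N + 1))
    (heig : ∀ i ≤ N, b i * (g (i + 1) - g i) + a i * (g (i - 1) - g i) = -lam * g i) :
    (∀ i ≤ N, g (i + 1) < g i) ∧
    (∀ n ≤ N,
      ∑ k ∈ Finset.Icc n N,
          (1 / (μ k * b k)) * ∑ i ∈ Finset.range (k + 1), μ i * g i =
        (g n - g (N + 1)) / lam) := by
  have hμpos : ∀ i ≤ N, 0 < μ i := by
    intro i hi
    rw [hμ i hi]
    apply div_pos
    · exact Finset.prod_pos fun j hj =>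
        hb j (le_of_lt (lt_of_lt_of_le (Finset.mem_range.mp hj) hi))
    · exact Finset.prod_pos fun j hj => by
        have := Finset.mem_Icc.mp hj
        exact ha j this.1 (le_trans this.2 hi)
  have hrec : ∀ i, 1 ≤ i → i ≤ N → μ i * a i = μ (i - 1) * b (i - 1) := by
    intro i h1 h2
    obtain ⟨m, rfl⟩ : ∃ m, i = m + 1 := ⟨i - 1, by omega⟩
    simp only [Nat.add_sub_cancel]
    rw [hμ (m + 1) h2, hμ m (by omega), Finset.prod_range_succ,
      Finset.prod_Icc_succ_top (by omega : 1 ≤ m + 1)]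
    have hane : a (m + 1) ≠ 0 := ne_of_gt (ha (m + 1) (by omega) h2)
    have hprodne : (∏ j ∈ Finset.Icc 1 m, a j) ≠ 0 :=
      ne_of_gt (Finset.prod_pos fun j hj => by
        have := Finset.mem_Icc.mp hj
        exact ha j this.1 (by omega))
    field_simp
  set S : ℕ → ℝ := fun k => ∑ i ∈ Finset.range (k + 1), μ i * g i with hS
  have hSpos : ∀ k ≤ N, 0 < S k := by
    intro k hk
    apply Finset.sum_pos
    · intro i hi
      have hi' : i ≤ N := by
        have := Finset.mem_range.mp hi; omega
      exact mul_pos (hμpos i hi') (hgpos i hi')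
    · exact ⟨0, Finset.mem_range.mpr (by omega)⟩
  have key : ∀ k ≤ N, μ k * b k * (g k - g (k + 1)) = lam * S k := by
    intro k
    induction k with
    | zero =>
      intro _
      have h0 := heig 0 (by omega)
      rw [ha0] at h0
      have hμ0 : μ 0 = 1 := by rw [hμ 0 (by omega)]; simp
      simp only [hS, zero_add, Finset.sum_range_one, hμ0]
      linarith [h0]
    | succ k ih =>
      intro hk
      have hk' : k ≤ N := by omega
      have ihk := ih hk'
      have he := heig (k + 1) hk
      simp only [Nat.add_sub_cancel] at he
      have hr := hrec (k + 1) (by omega) hk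
      simp only [Nat.add_sub_cancel] at hr
      have hSsucc : S (k + 1) = S k + μ (k + 1) * g (k + 1) := by
        simp only [hS, Finset.sum_range_succ]
      have hmul := congrArg (fun x => μ (k + 1) * x) he
      have h2 : μ (k + 1) * a (k + 1) * (g k - g (k + 1)) =
          μ k * b k * (g k - g (k + 1)) := by rw [hr]
      rw [hSsucc]
      linear_combination -hmul + h2 + ihk
  have hdec : ∀ i ≤ N, g (i + 1) < g i := by
    intro i hi
    have := key i hi
    have hpos : 0 < lam * S i := mul_pos hlam (hSpos i hi)
    have hmb : 0 < μ i * b i := mul_pos (hμpos i hi) (hb i hi)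
    nlinarith
  refine ⟨hdec, ?_⟩
  have hterm : ∀ k ≤ N, (1 / (μ k * b k)) * S k = (g k - g (k + 1)) / lam := by
    intro k hk
    have hmb : μ k * b k ≠ 0 := ne_of_gt (mul_pos (hμpos k hk) (hb k hk))
    have := key k hk
    have hl : lam ≠ 0 := ne_of_gt hlam
    field_simp
    rw [div_eq_iff hmb]
    linear_combination -this
  intro n hn
  have gen : ∀ m, n ≤ m → m ≤ N →
      ∑ k ∈ Finset.Icc n m, (1 / (μ k * b k)) * S k = (g n - g (m + 1)) / lam := by
    intro m hnm
    induction m, hnm using Nat.le_induction with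
    | base =>
      intro hnN
      rw [Finset.Icc_self, Finset.sum_singleton]
      exact hterm n hnN
    | succ m hnm ih =>
      intro hm
      rw [Finset.sum_Icc_succ_top (by omega : n ≤ m + 1), ih (by omega),
        hterm (m + 1) hm]
      field_simp
      ring
  exact gen N hn le_rfl
end

section
/- Let a_i > 0, b_i > 0, μ_i > 0 for i ∈ ℤ with μ_i b_i = μ_{i+1} a_{i+1}, fix θ ∈ ℤ and λ > 0, and assume ∑_{i=θ}^∞ μ_i = ∞. Then there is no g : ℤ → ℝ that is positive, nondecreasing, and satisfies b_i(g_{i+1} − g_i) + a_i(g_{i−1} − g_i) = −λ g_i for all i ∈ ℤ. -/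
/-!
With `h i = μ i * a i * (g i - g (i - 1))` (the flux of `g` across the edge `(i - 1, i)`),
detailed balance `μ i * b i = μ (i + 1) * a (i + 1)` turns the eigen-equation into
`h (i + 1) - h i = -λ μ i g i`. Telescoping from `θ` and using `h ≥ 0` (monotonicity of `g`)
gives `λ g θ ∑_{i=θ}^{θ+n} μ i ≤ λ ∑_{i=θ}^{θ+n} μ i g i ≤ h θ` for every `n`, so the partial
sums of `μ` are bounded, contradicting their divergence.
-/

open Finset

namespace BirthDeath

variable (a μ g : ℤ → ℝ)

def flux (i : ℤ) : ℝ := μ i * a i * (g i - g (i - 1))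

variable {a μ g}

theorem flux_succ_sub_flux {b : ℤ → ℝ} (hsym : ∀ i, μ i * b i = μ (i + 1) * a (i + 1)) (i : ℤ) :
    flux a μ g (i + 1) - flux a μ g i =
      μ i * (b i * (g (i + 1) - g i) + a i * (g (i - 1) - g i)) := by
  simp only [flux, add_sub_cancel_right, ← hsym i]
  ring

theorem flux_nonneg (ha : ∀ i, 0 ≤ a i) (hμ : ∀ i, 0 ≤ μ i) (hg : Monotone g) (i : ℤ) :
    0 ≤ flux a μ g i :=
  mul_nonneg (mul_nonneg (hμ i) (ha i)) (sub_nonneg.2 (hg (sub_le_self i zero_le_one)))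

end BirthDeath

theorem Int.sum_Icc_sub_telescope {M : Type*} [AddCommGroup M] (f : ℤ → M) (θ : ℤ) (n : ℕ) :
    ∑ i ∈ Icc θ (θ + n), (f (i + 1) - f i) = f (θ + n + 1) - f θ := by
  induction n with
  | zero => simp
  | succ n ih =>
    have hIcc : Icc θ (θ + (n + 1 : ℕ)) = insert (θ + n + 1) (Icc θ (θ + n)) := by
      ext x; simp only [mem_Icc, mem_insert]; omega
    rw [hIcc, sum_insert (by simp), ih]
    push_cast
    abel_nf

open BirthDeath in
theorem stmt_9_general (a b μ : ℤ → ℝ) (θ : ℤ) (lam : ℝ)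
    (ha : ∀ i, 0 < a i) (hμ : ∀ i, 0 < μ i)
    (hsym : ∀ i, μ i * b i = μ (i + 1) * a (i + 1)) (hlam : 0 < lam)
    (hdiv : Filter.Tendsto (fun n : ℕ => ∑ i ∈ Finset.Icc θ (θ + n), μ i)
      Filter.atTop Filter.atTop) :
    ¬ ∃ g : ℤ → ℝ, (∀ i, 0 < g i) ∧ (∀ i, g i ≤ g (i + 1)) ∧
      (∀ i, b i * (g (i + 1) - g i) + a i * (g (i - 1) - g i) = -lam * g i) := by
  rintro ⟨g, hpos, hmono, heq⟩
  have hg : Monotone g := monotone_int_of_le_succ hmono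
  have hbound (n : ℕ) : ∑ i ∈ Icc θ (θ + n), μ i ≤ flux a μ g θ / (lam * g θ) := by
    rw [le_div_iff₀ (mul_pos hlam (hpos θ))]
    calc (∑ i ∈ Icc θ (θ + n), μ i) * (lam * g θ)
        = lam * ∑ i ∈ Icc θ (θ + n), μ i * g θ := by
          rw [sum_mul, mul_sum]; exact sum_congr rfl fun i _ => by ring
      _ ≤ lam * ∑ i ∈ Icc θ (θ + n), μ i * g i := by
        gcongr with i hi
        exacts [(hμ i).le, hg (mem_Icc.1 hi).1]
      _ = flux a μ g θ - flux a μ g (θ + n + 1) := by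
        rw [← neg_sub, ← Int.sum_Icc_sub_telescope, mul_sum, ← sum_neg_distrib]
        refine sum_congr rfl fun i _ => ?_
        rw [flux_succ_sub_flux hsym, heq]
        ring
      _ ≤ flux a μ g θ :=
        sub_le_self _ (flux_nonneg (fun i => (ha i).le) (fun i => (hμ i).le) hg _)
  exact Filter.not_bddAbove_of_tendsto_atTop hdiv ⟨_, Set.forall_mem_range.2 hbound⟩

/-- Nonexistence of a positive nondecreasing eigenfunction for a birth–death
operator on `ℤ` when the symmetrizing measure has infinite right tail
`∑_{i=θ}^∞ μ i = ∞`. -/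
theorem stmt_9 (a b μ : ℤ → ℝ) (θ : ℤ) (lam : ℝ)
    (ha : ∀ i, 0 < a i) (hb : ∀ i, 0 < b i) (hμ : ∀ i, 0 < μ i)
    (hsym : ∀ i, μ i * b i = μ (i + 1) * a (i + 1)) (hlam : 0 < lam)
    (hdiv : Filter.Tendsto (fun n : ℕ => ∑ i ∈ Finset.Icc θ (θ + n), μ i)
      Filter.atTop Filter.atTop) :
    ¬ ∃ g : ℤ → ℝ, (∀ i, 0 < g i) ∧ (∀ i, g i ≤ g (i + 1)) ∧
      (∀ i, b i * (g (i + 1) - g i) + a i * (g (i - 1) - g i) = -lam * g i) :=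
  stmt_9_general a b μ θ lam ha hμ hsym hlam hdiv
end

section
/- Let −M−1 < θ < N+1 be integers (M, N finite for this statement), let a_i, b_i, μ_i > 0 on E = {−M,…,N}, and fix γ > 1. Define the connected chain on Ē = {−M,…,N+1} with measure μ̄_i = μ_i for i ≤ θ−1, μ̄_θ = μ_θ/γ, μ̄_{θ+1} = (γ−1)μ_θ/γ, μ̄_i = μ_{i−1} for i ≥ θ+2, and rates satisfying μ̄_i ā_i = μ_i a_i for i ≤ θ, μ̄_θ b̄_θ = (γ−1)μ_θ/γ, μ̄_i b̄_i = μ_{i−1} b_{i−1} for i ≥ θ+1. Given f : E → ℝ, define f̄ : Ē → ℝ by f̄_i = f_i for i ≤ θ and f̄_i = f_{i−1} for i ≥ θ+1. Then ∑_{i∈Ē} μ̄_i f̄_i² = ∑_{i∈E} μ_i f_i², and ∑_{−M < i ≤ θ} μ̄_i ā_i (f̄_i − f̄_{i−1})² + ∑_{θ+1 ≤ i ≤ N+1} μ̄_i b̄_i (f̄_{i+1} − f̄_i)² = ∑_{−M < i ≤ θ} μ_i a_i (f_i − f_{i−1})² + ∑_{θ ≤ i ≤ N} μ_i b_i (f_{i+1}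 − f_i)², with the boundary conventions f_{−M−1} = 0 and f_{N+1} = 0 (and correspondingly f̄_{−M−1} = 0, f̄_{N+2} = 0). -/
/-!
Both identities are reindexings. The mass `μ θ` is split as `μ θ / γ + (γ - 1) μ θ / γ` over two
states carrying the same value `f θ`, and every state beyond `θ` moves up by one. In the Dirichlet
form the new bond `θ ↔ θ + 1` joins two states with equal values, so it contributes nothing, and
the bonds beyond it are the old ones moved up by one.
-/

open Finset

section IntervalSums

variable {α M : Type*} [AddCommMonoid M]

theorem Finset.sum_Icc_add' [AddCommMonoid α] [PartialOrder α] [IsOrderedCancelAddMonoid α]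
    [ExistsAddOfLE α] [LocallyFiniteOrder α] (f : α → M) (a b c : α) :
    ∑ x ∈ Icc a b, f (x + c) = ∑ x ∈ Icc (a + c) (b + c), f x := by
  rw [← map_add_right_Icc, sum_map]
  rfl

theorem Finset.sum_Ico_add_sum_Icc [LinearOrder α] [LocallyFiniteOrder α] (f : α → M)
    {a b c : α} (hab : a ≤ b) (hbc : b ≤ c) :
    ∑ x ∈ Ico a b, f x + ∑ x ∈ Icc b c, f x = ∑ x ∈ Icc a c, f x := by
  rw [← sum_union (disjoint_left.2 fun x hx hx' => (mem_Ico.1 hx).2.not_ge (mem_Icc.1 hx').1)]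
  congr 1
  rw [← coe_inj, coe_union, coe_Ico, coe_Icc, coe_Icc, Set.Ico_union_Icc_eq_Icc hab hbc]

theorem Int.sum_Icc_split_term (g g' : ℤ → M) {lo θ hi : ℤ} (hlo : lo ≤ θ) (hhi : θ ≤ hi)
    (hleft : ∀ i < θ, g' i = g i) (hsplit : g' θ + g' (θ + 1) = g θ)
    (hright : ∀ i, θ + 2 ≤ i → g' i = g (i - 1)) :
    ∑ i ∈ Icc lo (hi + 1), g' i = ∑ i ∈ Icc lo hi, g i := by
  have hfront : ∑ i ∈ Ico lo θ, g' i = ∑ i ∈ Ico lo θ, g i :=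
    sum_congr rfl fun i hi => hleft i (mem_Ico.1 hi).2
  have hback : ∑ i ∈ Icc (θ + 1 + 1) (hi + 1), g' i = ∑ i ∈ Icc (θ + 1) hi, g i := by
    rw [← sum_Icc_add']
    refine sum_congr rfl fun i hi => ?_
    rw [hright _ (by linarith [(mem_Icc.1 hi).1]), add_sub_cancel_right]
  rw [← sum_Ico_add_sum_Icc _ hlo (by omega), ← sum_Ico_add_sum_Icc _ hlo hhi,
    ← insert_Icc_add_one_left_eq_Icc (by omega), sum_insert (by simp),
    ← insert_Icc_add_one_left_eq_Icc (by omega), sum_insert (by simp),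
    ← insert_Icc_add_one_left_eq_Icc hhi, sum_insert (by simp), hfront, hback, ← hsplit]
  abel

end IntervalSums

theorem stmt_19_general (M N θ : ℤ) (hθ1 : -M ≤ θ) (hθ2 : θ ≤ N) (γ : ℝ) (hγ : 1 < γ)
    (a b μ abar bbar μbar f fbar : ℤ → ℝ)
    (hμbar1 : ∀ i, i ≤ θ - 1 → μbar i = μ i)
    (hμbarθ : μbar θ = μ θ / γ)
    (hμbarθ1 : μbar (θ + 1) = (γ - 1) * μ θ / γ)
    (hμbar2 : ∀ i, θ + 2 ≤ i → μbar i = μ (i - 1))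
    (habar : ∀ i, i ≤ θ → μbar i * abar i = μ i * a i)
    (hbbar : ∀ i, θ + 1 ≤ i → μbar i * bbar i = μ (i - 1) * b (i - 1))
    (hfbar1 : ∀ i, i ≤ θ → fbar i = f i)
    (hfbar2 : ∀ i, θ + 1 ≤ i → fbar i = f (i - 1)) :
    (∑ i ∈ Finset.Icc (-M) (N + 1), μbar i * fbar i ^ 2 =
        ∑ i ∈ Finset.Icc (-M) N, μ i * f i ^ 2) ∧
    (∑ i ∈ Finset.Icc (-M + 1) θ, μbar i * abar i * (fbar i - fbar (i - 1)) ^ 2 +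
        ∑ i ∈ Finset.Icc (θ + 1) (N + 1), μbar i * bbar i * (fbar (i + 1) - fbar i) ^ 2 =
      ∑ i ∈ Finset.Icc (-M + 1) θ, μ i * a i * (f i - f (i - 1)) ^ 2 +
        ∑ i ∈ Finset.Icc θ N, μ i * b i * (f (i + 1) - f i) ^ 2) := by
  refine ⟨Int.sum_Icc_split_term _ _ hθ1 hθ2 (fun i hi => ?_) ?_ fun i hi => ?_, ?_⟩
  · rw [hμbar1 i (by omega), hfbar1 i hi.le]
  · rw [hμbarθ, hμbarθ1, hfbar1 θ le_rfl, hfbar2 (θ + 1) le_rfl, add_sub_cancel_right]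
    field_simp
    ring
  · rw [hμbar2 i hi, hfbar2 i (by omega)]
  · have hbirth : ∑ i ∈ Icc (-M + 1) θ, μbar i * abar i * (fbar i - fbar (i - 1)) ^ 2 =
        ∑ i ∈ Icc (-M + 1) θ, μ i * a i * (f i - f (i - 1)) ^ 2 :=
      sum_congr rfl fun i hi => by
        have hiθ := (mem_Icc.1 hi).2
        rw [habar i hiθ, hfbar1 i hiθ, hfbar1 (i - 1) (by omega)]
    have hdeath : ∑ i ∈ Icc (θ + 1) (N + 1), μbar i * bbar i * (fbar (i + 1) - fbar i) ^ 2 =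
        ∑ i ∈ Icc θ N, μ i * b i * (f (i + 1) - f i) ^ 2 := by
      rw [← sum_Icc_add']
      refine sum_congr rfl fun i hi => ?_
      have hθi := (mem_Icc.1 hi).1
      rw [hbbar (i + 1) (by omega), hfbar2 (i + 1 + 1) (by omega), hfbar2 (i + 1) (by omega),
        add_sub_cancel_right, add_sub_cancel_right]
    rw [hbirth, hdeath]

/-- Splitting lemma for birth–death Dirichlet forms: duplicating the state `θ`
into two states (carrying fractions `1/γ` and `(γ−1)/γ` of the mass `μ θ`) and
extending `f` by repeating its value at `θ` preserves both the `L²(μ)`-norm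
and the Dirichlet form. -/
theorem stmt_19 (M N θ : ℤ) (hθ1 : -M ≤ θ) (hθ2 : θ ≤ N) (γ : ℝ) (hγ : 1 < γ)
    (a b μ abar bbar μbar f fbar : ℤ → ℝ)
    (hapos : ∀ i, -M ≤ i → i ≤ N → 0 < a i)
    (hbpos : ∀ i, -M ≤ i → i ≤ N → 0 < b i)
    (hμpos : ∀ i, -M ≤ i → i ≤ N → 0 < μ i)
    (hμbar1 : ∀ i, i ≤ θ - 1 → μbar i = μ i)
    (hμbarθ : μbar θ = μ θ / γ)
    (hμbarθ1 : μbar (θ + 1) = (γ - 1) * μ θ / γ)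
    (hμbar2 : ∀ i, θ + 2 ≤ i → μbar i = μ (i - 1))
    (habar : ∀ i, i ≤ θ → μbar i * abar i = μ i * a i)
    (hbbarθ : μbar θ * bbar θ = (γ - 1) * μ θ / γ)
    (hbbar : ∀ i, θ + 1 ≤ i → μbar i * bbar i = μ (i - 1) * b (i - 1))
    (hfL : f (-M - 1) = 0) (hfR : f (N + 1) = 0)
    (hfbar1 : ∀ i, i ≤ θ → fbar i = f i)
    (hfbar2 : ∀ i, θ + 1 ≤ i → fbar i = f (i - 1)) :
    (∑ i ∈ Finset.Icc (-M) (N + 1), μbar i * fbar i ^ 2 =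
        ∑ i ∈ Finset.Icc (-M) N, μ i * f i ^ 2) ∧
    (∑ i ∈ Finset.Icc (-M + 1) θ, μbar i * abar i * (fbar i - fbar (i - 1)) ^ 2 +
        ∑ i ∈ Finset.Icc (θ + 1) (N + 1), μbar i * bbar i * (fbar (i + 1) - fbar i) ^ 2 =
      ∑ i ∈ Finset.Icc (-M + 1) θ, μ i * a i * (f i - f (i - 1)) ^ 2 +
        ∑ i ∈ Finset.Icc θ N, μ i * b i * (f (i + 1) - f i) ^ 2) :=
  stmt_19_general M N θ hθ1 hθ2 γ hγ a b μ abar bbar μbar f fbar hμbar1 hμbarθ hμbarθ1 hμbar2 habar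
    hbbar hfbar1 hfbar2
end
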